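/- arXiv:2503.07069 — 4 statements merged into one kernel-verified Lean document; each statement's English description precedes it below -/
import Mathlib

section
/- For all sufficiently small s > 0, one has 1 − e^{-s/2} > e^{s/(1−e^s)} (1 − e^{-s}). -/
open Real

theorem symmetry_breaking_inequality :
    ∃ ε > 0, ∀ s : ℝ, 0 < s → s < ε →
      Real.exp (s / (1 - Real.exp s)) * (1 - Real.exp (-s)) < 1 - Real.exp (-(s / 2)) := by
  refine ⟨1/20, by norm_num, fun s hs hse => ?_⟩
  have hs1 : s ≤ 1/20 := le_of_lt hse
  -- Taylor bounds
  have hA : Real.exp s ≤ 1 + s + s^2/2 + (2/9)*s^3 := by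
    have h := Real.exp_bound' (le_of_lt hs) (by linarith) (n := 3) (by norm_num)
    simp [Finset.sum_range_succ, Nat.factorial] at h
    nlinarith [h]
  have hC : Real.exp (s/2) ≤ 1 + s/2 + (3/16)*s^2 := by
    have h := Real.exp_bound' (x := s/2) (by linarith) (by linarith) (n := 2) (by norm_num)
    simp [Finset.sum_range_succ, Nat.factorial] at h
    nlinarith [h]
  have hB : Real.exp (-(s/2)) ≤ 1 - s/2 + (3/16)*s^2 := by
    have habs : |(-(s/2))| ≤ 1 := by rw [abs_neg, abs_of_pos (by linarith)]; linarith
    have h := Real.exp_bound habs (n := 2) (by norm_num)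
    simp [Finset.sum_range_succ, Nat.factorial] at h
    have h2 := (abs_sub_le_iff.1 h).1
    nlinarith [h2]
  -- lower bound on exp s
  have hlow : 1 + s < Real.exp s := by
    have := Real.add_one_lt_exp (x := s) (by positivity)
    linarith
  have hden : 1 - Real.exp s < 0 := by linarith
  -- exponent bound : s / (1 - exp s) ≤ s/2 - 1
  have hexp : s / (1 - Real.exp s) ≤ s/2 - 1 := by
    rw [div_le_iff_of_neg hden]
    nlinarith [hA, hlow]
  have h1 : Real.exp (s / (1 - Real.exp s)) ≤ Real.exp (s/2 - 1) :=
    Real.exp_le_exp.2 hexp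
  -- 1 - exp(-s) < s, and positive
  have hD : Real.exp (-s) > 1 - s := by
    have := Real.add_one_lt_exp (x := -s) (neg_ne_zero.2 hs.ne')
    linarith
  have hDpos : 0 < 1 - Real.exp (-s) := by
    have : Real.exp (-s) < 1 := Real.exp_lt_one_iff.2 (by linarith)
    linarith
  -- exp(s/2 - 1) = exp(s/2) / exp 1, bound exp 1
  have he1 : (2.7182818283 : ℝ) < Real.exp 1 := Real.exp_one_gt_d9
  have hsplit : Real.exp (s/2 - 1) = Real.exp (s/2) / Real.exp 1 := by
    rw [Real.exp_sub]
  have h2 : Real.exp (s/2 - 1) ≤ (1 + s/2 + (3/16)*s^2) / 2.7182818283 := by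
    rw [hsplit]
    apply div_le_div₀ (by positivity) hC (by norm_num) (le_of_lt he1)
  -- combine
  have hLHS : Real.exp (s / (1 - Real.exp s)) * (1 - Real.exp (-s))
      < ((1 + s/2 + (3/16)*s^2) / 2.7182818283) * s := by
    have hlt : 1 - Real.exp (-s) < s := by linarith
    calc Real.exp (s / (1 - Real.exp s)) * (1 - Real.exp (-s))
        ≤ Real.exp (s/2 - 1) * (1 - Real.exp (-s)) :=
          mul_le_mul_of_nonneg_right h1 (le_of_lt hDpos)
      _ < Real.exp (s/2 - 1) * s :=
          mul_lt_mul_of_pos_left hlt (Real.exp_pos _)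
      _ ≤ ((1 + s/2 + (3/16)*s^2) / 2.7182818283) * s :=
          mul_le_mul_of_nonneg_right h2 (le_of_lt hs)
  have hRHS : s/2 - (3/16)*s^2 ≤ 1 - Real.exp (-(s/2)) := by linarith
  have hkey : ((1 + s/2 + (3/16)*s^2) / 2.7182818283) * s ≤ s/2 - (3/16)*s^2 := by
    rw [div_mul_eq_mul_div, div_le_iff₀ (by norm_num : (0:ℝ) < 2.7182818283)]
    nlinarith [sq_nonneg s, mul_pos hs hs]
  linarith
end

section
/- Extended Karamata inequality: let (x_k) and (y_k) be decreasing sequences in (0,1) with ∑_{k=1}^N x_k ≤ ∑_{k=1}^N y_k for every N ≥ 1 and ∑_{k=1}^∞ x_k = ∑_{k=1}^∞ y_k < ∞. Then for every convex function Φ : (0,1) → ℝ, ∑_{k=1}^∞ Φ(x_k) ≤ ∑_{k=1}^∞ Φ(y_k) (both sums being well-defined in the extended reals). -/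
/-!
Convexity makes the sign of `Φ` constant near `0`, so both partial sums are eventually monotone
and converge in `EReal`. Let `c k` be the right derivative of `Φ` at `x k`: it is a subgradient,
and it is antitone in `k` because `x` is. Abel summation against the nonnegative partial sums of
`y - x` gives `∑_{k ≤ n} Φ (y k) - ∑_{k ≤ n} Φ (x k) ≥ c n * ∑_{k ≤ n} (y k - x k)`, which settles
the case where `c n ≥ 0` infinitely often. Otherwise `Φ` decreases near `0`. If
`∑ Φ (x k) = ∞`, some `Φ (x j) > 0` bounds `Φ` from below on `(0, x j]`, so `∑ Φ (y k) = ∞`.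
If `∑ Φ (x k) = s` is finite, then `Φ (x k) → 0`, hence `Φ (x k) ≤ c k * x k`, and the defect
`-c n * ∑_{k > n} (x k - y k)` is at most the tail `∑_{k > n} -Φ (x k)`; this gives
`s ≤ ∑_{k ≤ n} Φ (y k)`.
-/

open Filter Topology Finset Set

lemma exists_tendsto_of_eventually_monotone {α : Type*} [CompleteLinearOrder α]
    [TopologicalSpace α] [OrderTopology α] {g : ℕ → α} (h : ∀ᶠ n in atTop, g n ≤ g (n + 1)) :
    ∃ S, Tendsto g atTop (𝓝 S) := by
  obtain ⟨k, hk⟩ := eventually_atTop.1 h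
  refine ⟨_, (tendsto_add_atTop_iff_nat k).1 (tendsto_atTop_iSup (monotone_nat_of_le_succ ?_))⟩
  exact fun n => by simpa [Nat.add_right_comm] using hk (n + k) le_add_self

lemma exists_tendsto_coe_sum_range {g : ℕ → ℝ}
    (hg : (∀ᶠ k in atTop, 0 ≤ g k) ∨ ∀ᶠ k in atTop, g k ≤ 0) :
    ∃ S : EReal, Tendsto (fun N => ((∑ k ∈ range N, g k : ℝ) : EReal)) atTop (𝓝 S) := by
  rcases hg with hg | hg
  · exact exists_tendsto_of_eventually_monotone <| hg.mono fun k hk =>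
      EReal.coe_le_coe_iff.2 (by simpa [sum_range_succ] using hk)
  · exact exists_tendsto_of_eventually_monotone (α := ERealᵒᵈ) <| hg.mono fun k hk =>
      EReal.coe_le_coe_iff.2 (by simpa [sum_range_succ] using hk)

lemma tendsto_sum_range_atTop_of_eventually_le {g : ℕ → ℝ} {ε : ℝ} (hε : 0 < ε)
    (hg : ∀ᶠ k in atTop, ε ≤ g k) : Tendsto (fun N => ∑ k ∈ range N, g k) atTop atTop := by
  obtain ⟨k₀, hk₀⟩ := eventually_atTop.1 hg
  have hlow (N : ℕ) : ∑ k ∈ range k₀, g k + N * ε ≤ ∑ k ∈ range (N + k₀), g k := by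
    rw [add_comm N, sum_range_add]
    gcongr
    simpa using card_nsmul_le_sum (range N) (fun k => g (k₀ + k)) ε
      fun k _ => hk₀ _ le_self_add
  refine (tendsto_add_atTop_iff_nat k₀).1 (tendsto_atTop_mono hlow ?_)
  exact tendsto_atTop_add_const_left _ _ (tendsto_natCast_atTop_atTop.atTop_mul_const hε)

lemma frequently_pos_of_tendsto_coe_sum_range_top {g : ℕ → ℝ}
    (h : Tendsto (fun N => ((∑ k ∈ range N, g k : ℝ) : EReal)) atTop (𝓝 ⊤)) :
    ∃ᶠ k in atTop, 0 < g k := by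
  rw [EReal.tendsto_coe_nhds_top_iff] at h
  refine frequently_atTop.2 fun n => ?_
  obtain ⟨N, hN, hnN⟩ :=
    ((h.eventually_gt_atTop (∑ k ∈ range n, g k)).and (eventually_ge_atTop n)).exists
  rw [← sum_range_add_sum_Ico g hnN, lt_add_iff_pos_right] at hN
  obtain ⟨k, hk, hgk⟩ := exists_lt_of_sum_lt (f := fun _ => (0 : ℝ)) (by simpa using hN)
  exact ⟨k, (mem_Ico.1 hk).1, hgk⟩

lemma sub_sum_range_le_sub_sum_range {a b : ℕ → ℝ} {α β : ℝ}
    (ha : Tendsto (fun N => ∑ k ∈ range N, a k) atTop (𝓝 α))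
    (hb : Tendsto (fun N => ∑ k ∈ range N, b k) atTop (𝓝 β)) {n : ℕ} (hab : ∀ k ≥ n, a k ≤ b k) :
    α - ∑ k ∈ range n, a k ≤ β - ∑ k ∈ range n, b k := by
  refine le_of_tendsto_of_tendsto (ha.sub_const _) (hb.sub_const _) ?_
  filter_upwards [eventually_ge_atTop n] with N hN
  rw [← sum_range_add_sum_Ico a hN, ← sum_range_add_sum_Ico b hN, add_sub_cancel_left,
    add_sub_cancel_left]
  exact sum_le_sum fun k hk => hab k (mem_Ico.1 hk).1

lemma Antitone.mul_sum_range_succ_le_sum_mul {c d : ℕ → ℝ} (hc : Antitone c)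
    (hd : ∀ m, 0 ≤ ∑ k ∈ range m, d k) (n : ℕ) :
    c n * ∑ k ∈ range (n + 1), d k ≤ ∑ k ∈ range (n + 1), c k * d k := by
  induction n with
  | zero => simp
  | succ n ih =>
    have hstep : c (n + 1) * ∑ k ∈ range (n + 1), d k ≤ c n * ∑ k ∈ range (n + 1), d k :=
      mul_le_mul_of_nonneg_right (hc n.le_succ) (hd _)
    rw [sum_range_succ _ (n + 1), sum_range_succ _ (n + 1), mul_add]
    linarith

namespace ConvexOn

variable {S : Set ℝ} {f : ℝ → ℝ}

lemma eventually_nonneg_or_eventually_nonpos {a b : ℝ} (hf : ConvexOn ℝ (Ioo a b) f)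
    (hab : a < b) : (∀ᶠ t in 𝓝[>] a, 0 ≤ f t) ∨ ∀ᶠ t in 𝓝[>] a, f t ≤ 0 := by
  refine or_iff_not_imp_left.2 fun hnonneg => ?_
  have hneg : ∃ᶠ t in 𝓝[>] a, f t < 0 := by simpa using hnonneg
  obtain ⟨b', hb', hb'ab⟩ := (hneg.and_eventually (Ioo_mem_nhdsGT hab)).exists
  filter_upwards [Ioo_mem_nhdsGT hb'ab.1] with t ht
  obtain ⟨s, hs, hsat⟩ := (hneg.and_eventually (Ioo_mem_nhdsGT ht.1)).exists
  have hmem := (hf.convex_lt 0).ordConnected.out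
    ⟨⟨hsat.1, (hsat.2.trans ht.2).trans hb'ab.2⟩, hs⟩ ⟨hb'ab, hb'⟩ ⟨hsat.2.le, ht.2.le⟩
  exact hmem.2.le

lemma exists_tendsto_coe_sum_range_comp {a b : ℝ} (hf : ConvexOn ℝ (Ioo a b) f) (hab : a < b)
    {z : ℕ → ℝ} (hz : Tendsto z atTop (𝓝[>] a)) :
    ∃ S : EReal, Tendsto (fun N => ((∑ k ∈ range N, f (z k) : ℝ) : EReal)) atTop (𝓝 S) :=
  exists_tendsto_coe_sum_range <|
    (hf.eventually_nonneg_or_eventually_nonpos hab).imp hz.eventually hz.eventually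

lemma add_rightDeriv_mul_sub_le (hf : ConvexOn ℝ S f) {x y : ℝ} (hx : x ∈ interior S)
    (hy : y ∈ S) : f x + derivWithin f (Ioi x) x * (y - x) ≤ f y := by
  rcases lt_trichotomy y x with hyx | rfl | hxy
  · have h := (hf.slope_le_leftDeriv_of_mem_interior hy hx hyx).trans
      (hf.leftDeriv_le_rightDeriv_of_mem_interior hx)
    rw [slope_def_field, div_le_iff₀ (sub_pos.2 hyx)] at h
    linarith
  · simp
  · have h := hf.rightDeriv_le_slope_of_mem_interior hx hy hxy
    rw [slope_def_field, le_div_iff₀ (sub_pos.2 hxy)] at h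
    linarith

lemma le_of_rightDeriv_nonpos (hf : ConvexOn ℝ S f) {x y : ℝ} (hx : x ∈ interior S)
    (hc : derivWithin f (Ioi x) x ≤ 0) (hy : y ∈ S) (hyx : y ≤ x) : f x ≤ f y := by
  have := mul_nonneg_of_nonpos_of_nonpos hc (sub_nonpos.2 hyx)
  linarith [hf.add_rightDeriv_mul_sub_le hx hy]

lemma add_rightDeriv_mul_sub_le_of_tendsto {ι : Type*} {l : Filter ι} [l.NeBot]
    (hf : ConvexOn ℝ S f) {x : ℝ} (hx : x ∈ interior S) {u : ι → ℝ} (huS : ∀ i, u i ∈ S)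
    {a L : ℝ} (hu : Tendsto u l (𝓝 a)) (hfu : Tendsto (fun i => f (u i)) l (𝓝 L)) :
    f x + derivWithin f (Ioi x) x * (a - x) ≤ L :=
  le_of_tendsto_of_tendsto' (tendsto_const_nhds.add ((hu.sub_const x).const_mul _)) hfu
    fun i => hf.add_rightDeriv_mul_sub_le hx (huS i)

lemma antitone_rightDeriv_comp (hf : ConvexOn ℝ S f) {ι : Type*} [Preorder ι] {x : ι → ℝ}
    (hx : Antitone x) (hxS : ∀ k, x k ∈ interior S) :
    Antitone fun k => derivWithin f (Ioi (x k)) (x k) :=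
  fun _ _ hkl => hf.monotoneOn_rightDeriv (hxS _) (hxS _) (hx hkl)

lemma sum_range_add_rightDeriv_mul_le (hf : ConvexOn ℝ S f) {x y : ℕ → ℝ} (hx : Antitone x)
    (hxS : ∀ k, x k ∈ interior S) (hyS : ∀ k, y k ∈ S)
    (hmaj : ∀ N, ∑ k ∈ range N, x k ≤ ∑ k ∈ range N, y k) (n : ℕ) :
    ∑ k ∈ range (n + 1), f (x k) + derivWithin f (Ioi (x n)) (x n) *
      (∑ k ∈ range (n + 1), y k - ∑ k ∈ range (n + 1), x k) ≤ ∑ k ∈ range (n + 1), f (y k) := by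
  have habel := (hf.antitone_rightDeriv_comp hx hxS).mul_sum_range_succ_le_sum_mul
    (d := fun k => y k - x k) (fun m => by simpa [sum_sub_distrib] using hmaj m) n
  have hsub : ∑ k ∈ range (n + 1), derivWithin f (Ioi (x k)) (x k) * (y k - x k) ≤
      ∑ k ∈ range (n + 1), (f (y k) - f (x k)) :=
    sum_le_sum fun k _ => by linarith [hf.add_rightDeriv_mul_sub_le (hxS k) (hyS k)]
  rw [sum_sub_distrib] at habel hsub
  linarith

end ConvexOn

section Majorization

variable {Φ : ℝ → ℝ} {x y : ℕ → ℝ}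

lemma tendsto_sum_range_top_of_rightDeriv_nonpos (hΦ : ConvexOn ℝ (Ioo 0 1) Φ)
    (hx01 : ∀ k, x k ∈ Ioo (0 : ℝ) 1) (hy01 : ∀ k, y k ∈ Ioo (0 : ℝ) 1)
    (hy0 : Tendsto y atTop (𝓝 0)) (hc : ∀ᶠ k in atTop, derivWithin Φ (Ioi (x k)) (x k) ≤ 0)
    (hSx : Tendsto (fun N => ((∑ k ∈ range N, Φ (x k) : ℝ) : EReal)) atTop (𝓝 ⊤)) :
    Tendsto (fun N => ((∑ k ∈ range N, Φ (y k) : ℝ) : EReal)) atTop (𝓝 ⊤) := by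
  obtain ⟨j, hj, hcj⟩ :=
    ((frequently_pos_of_tendsto_coe_sum_range_top hSx).and_eventually hc).exists
  rw [EReal.tendsto_coe_nhds_top_iff]
  refine tendsto_sum_range_atTop_of_eventually_le hj ?_
  filter_upwards [hy0.eventually (eventually_lt_nhds (hx01 j).1)] with k hk
  exact hΦ.le_of_rightDeriv_nonpos (by simpa using hx01 j) hcj (hy01 k) hk.le

lemma le_sum_range_of_rightDeriv_nonpos (hΦ : ConvexOn ℝ (Ioo 0 1) Φ) (hx : Antitone x)
    (hx01 : ∀ k, x k ∈ Ioo (0 : ℝ) 1) (hy01 : ∀ k, y k ∈ Ioo (0 : ℝ) 1)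
    (hmaj : ∀ N, ∑ k ∈ range N, x k ≤ ∑ k ∈ range N, y k)
    (hsx : Summable x) (hsy : Summable y) (hsum : ∑' k, x k = ∑' k, y k)
    {s : ℝ} (hs : Tendsto (fun N => ∑ k ∈ range N, Φ (x k)) atTop (𝓝 s))
    {n : ℕ} (hcn : derivWithin Φ (Ioi (x n)) (x n) ≤ 0) :
    s ≤ ∑ k ∈ range (n + 1), Φ (y k) := by
  have hxS : ∀ k, x k ∈ interior (Ioo (0 : ℝ) 1) := by simpa using hx01
  set c := fun k => derivWithin Φ (Ioi (x k)) (x k)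
  have hΦx : Tendsto (fun k => Φ (x k)) atTop (𝓝 0) := by
    simpa [sum_range_succ_sub_sum] using (hs.comp (tendsto_add_atTop_nat 1)).sub hs
  have hΦx_le (k : ℕ) : Φ (x k) ≤ c k * x k := by
    have := hΦ.add_rightDeriv_mul_sub_le_of_tendsto (hxS k) hx01 hsx.tendsto_atTop_zero hΦx
    linarith
  have htail : -c n * (∑' k, x k - ∑ k ∈ range (n + 1), x k) ≤
      ∑ k ∈ range (n + 1), Φ (x k) - s := by
    have hsumx : Tendsto (fun N => ∑ k ∈ range N, -c n * x k) atTop (𝓝 (-c n * ∑' k, x k)) := by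
      simpa [← mul_sum] using hsx.hasSum.tendsto_sum_nat.const_mul (-c n)
    have hc_anti : Antitone c := hΦ.antitone_rightDeriv_comp hx hxS
    have := sub_sum_range_le_sub_sum_range (b := fun k => -Φ (x k)) (n := n + 1) hsumx
      (by simpa only [sum_neg_distrib] using hs.neg) fun k hk => by
        have := mul_le_mul_of_nonneg_right (neg_le_neg (hc_anti (n.le_succ.trans hk)))
          (hx01 k).1.le
        linarith [hΦx_le k]
    simp only [← mul_sum, sum_neg_distrib] at this
    linarith
  have hdefect : ∑ k ∈ range (n + 1), y k - ∑ k ∈ range (n + 1), x k ≤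
      ∑' k, x k - ∑ k ∈ range (n + 1), x k :=
    sub_le_sub_right (hsum ▸ hsy.sum_le_tsum _ fun k _ => (hy01 k).1.le) _
  have := mul_le_mul_of_nonneg_left hdefect (neg_nonneg.2 hcn)
  linarith [hΦ.sum_range_add_rightDeriv_mul_le hx hxS hy01 hmaj n]

end Majorization

theorem extended_karamata_general (x y : ℕ → ℝ) (hx : Antitone x)
    (hx01 : ∀ k, x k ∈ Set.Ioo (0 : ℝ) 1) (hy01 : ∀ k, y k ∈ Set.Ioo (0 : ℝ) 1)
    (hmaj : ∀ N : ℕ, ∑ k ∈ Finset.range N, x k ≤ ∑ k ∈ Finset.range N, y k)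
    (hsx : Summable x) (hsy : Summable y)
    (hsum : ∑' k, x k = ∑' k, y k)
    (Φ : ℝ → ℝ) (hΦ : ConvexOn ℝ (Set.Ioo 0 1) Φ) :
    ∃ Sx Sy : EReal,
      Tendsto (fun N => ((∑ k ∈ Finset.range N, Φ (x k) : ℝ) : EReal)) atTop (𝓝 Sx) ∧
      Tendsto (fun N => ((∑ k ∈ Finset.range N, Φ (y k) : ℝ) : EReal)) atTop (𝓝 Sy) ∧
      Sx ≤ Sy := by
  have hxS : ∀ k, x k ∈ interior (Ioo (0 : ℝ) 1) := by simpa using hx01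
  obtain ⟨Sx, hSx⟩ := hΦ.exists_tendsto_coe_sum_range_comp zero_lt_one <|
    tendsto_nhdsWithin_iff.2 ⟨hsx.tendsto_atTop_zero, .of_forall fun k => (hx01 k).1⟩
  obtain ⟨Sy, hSy⟩ := hΦ.exists_tendsto_coe_sum_range_comp zero_lt_one <|
    tendsto_nhdsWithin_iff.2 ⟨hsy.tendsto_atTop_zero, .of_forall fun k => (hy01 k).1⟩
  refine ⟨Sx, Sy, hSx, hSy, ?_⟩
  have hSy' := hSy.comp (tendsto_add_atTop_nat 1)
  by_cases hc : ∃ᶠ n in atTop, 0 ≤ derivWithin Φ (Ioi (x n)) (x n)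
  · refine le_of_tendsto_of_tendsto_of_frequently (hSx.comp (tendsto_add_atTop_nat 1)) hSy'
      (hc.mono fun n hn => EReal.coe_le_coe_iff.2 ?_)
    have := mul_nonneg hn (sub_nonneg.2 (hmaj (n + 1)))
    linarith [hΦ.sum_range_add_rightDeriv_mul_le hx hxS hy01 hmaj n]
  have hc' : ∀ᶠ n in atTop, derivWithin Φ (Ioi (x n)) (x n) ≤ 0 :=
    (not_frequently.1 hc).mono fun n hn => (not_le.1 hn).le
  cases Sx with
  | bot => exact bot_le
  | coe s =>
    exact ge_of_tendsto hSy' <| hc'.mono fun n hn => EReal.coe_le_coe_iff.2 <|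
      le_sum_range_of_rightDeriv_nonpos hΦ hx hx01 hy01 hmaj hsx hsy hsum
        (EReal.tendsto_coe.1 hSx) hn
  | top =>
    exact (tendsto_nhds_unique (tendsto_sum_range_top_of_rightDeriv_nonpos hΦ hx01 hy01
      hsy.tendsto_atTop_zero hc' hSx) hSy).le

theorem extended_karamata (x y : ℕ → ℝ) (hx : Antitone x) (hy : Antitone y)
    (hx01 : ∀ k, x k ∈ Set.Ioo (0 : ℝ) 1) (hy01 : ∀ k, y k ∈ Set.Ioo (0 : ℝ) 1)
    (hmaj : ∀ N : ℕ, ∑ k ∈ Finset.range N, x k ≤ ∑ k ∈ Finset.range N, y k)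
    (hsx : Summable x) (hsy : Summable y)
    (hsum : ∑' k, x k = ∑' k, y k)
    (Φ : ℝ → ℝ) (hΦ : ConvexOn ℝ (Set.Ioo 0 1) Φ) :
    ∃ Sx Sy : EReal,
      Tendsto (fun N => ((∑ k ∈ Finset.range N, Φ (x k) : ℝ) : EReal)) atTop (𝓝 Sx) ∧
      Tendsto (fun N => ((∑ k ∈ Finset.range N, Φ (y k) : ℝ) : EReal)) atTop (𝓝 Sy) ∧
      Sx ≤ Sy :=
  extended_karamata_general x y hx hx01 hy01 hmaj hsx hsy hsum Φ hΦ
end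

section
/- Equality case of extended Karamata: under the hypotheses of the extended Karamata inequality, if in addition Φ is not affine on the interval (0, y₁], the series ∑ Φ(y_k) converges, and ∑_{k=1}^∞ Φ(x_k) = ∑_{k=1}^∞ Φ(y_k), then there exists N ≥ 1 with ∑_{k=1}^N x_k = ∑_{k=1}^N y_k. -/
/-!
Suppose every gap `D N = ∑ k < N, (x k - y k)` with `N ≥ 1` is negative. Write
`Φ (x k) - Φ (y k) = t k * (x k - y k)` with `t k` the slope of the chord of `Φ` between `x k`
and `y k`; as both sequences decrease the chords move left, so by convexity `t` can be chosen
antitone. Summation by parts turns `∑ t k * (x k - y k) = 0` into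
`∑ (t k - t (k + 1)) * (-D (k + 1)) = 0`, a series of nonnegative terms (the boundary term is
controlled by the absolute convergence of `∑ (Φ (x k) - Φ (y k))`). Hence `t` is constant, so
chords reaching arbitrarily close to `0` all lie on the line through the first one, and `Φ` is
affine on `(0, y 0]`.
-/

open Filter Topology Finset

section Slope

variable {𝕜 : Type*} [Field 𝕜] {f : 𝕜 → 𝕜}

theorem sub_mul_slope (f : 𝕜 → 𝕜) (a b : 𝕜) : (b - a) * slope f a b = f b - f a :=
  sub_smul_slope f a b

theorem slope_eq_of_slope_eq_slope {p q w : 𝕜} (hpq : p ≠ q) (h : slope f p w = slope f q w) :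
    slope f p q = slope f q w := by
  have hpw := sub_mul_slope f p w
  have hqw := sub_mul_slope f q w
  refine mul_left_cancel₀ (sub_ne_zero.2 hpq.symm) ?_
  linear_combination sub_mul_slope f p q - hpw + hqw + (w - p) * h

variable [LinearOrder 𝕜] [IsStrictOrderedRing 𝕜] {s : Set 𝕜}

theorem ConvexOn.slope_le_slope_of_le_of_le (hf : ConvexOn 𝕜 s f) {a b a' b' : 𝕜} (ha : a ∈ s)
    (hb : b ∈ s) (ha' : a' ∈ s) (hb' : b' ∈ s) (hab : a ≠ b) (hab' : a' ≠ b') (haa' : a ≤ a')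
    (hbb' : b ≤ b') : slope f a b ≤ slope f a' b' := by
  by_cases hba' : a' = b
  · have hab'' : a ≠ b' := by
      rintro rfl
      exact hab (le_antisymm (haa'.trans hba'.le) hbb')
    calc slope f a b ≤ slope f a b' :=
          hf.slope_mono ha ⟨hb, hab.symm⟩ ⟨hb', hab''.symm⟩ hbb'
      _ = slope f b' a := slope_comm f a b'
      _ ≤ slope f b' a' := hf.slope_mono hb' ⟨ha, hab''⟩ ⟨ha', hab'⟩ haa'
      _ = slope f a' b' := slope_comm f b' a'
  · calc slope f a b = slope f b a := slope_comm f a b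
      _ ≤ slope f b a' := hf.slope_mono hb ⟨ha, hab⟩ ⟨ha', hba'⟩ haa'
      _ = slope f a' b := slope_comm f b a'
      _ ≤ slope f a' b' := hf.slope_mono ha' ⟨hb, Ne.symm hba'⟩ ⟨hb', hab'.symm⟩ hbb'

theorem ConvexOn.eq_add_slope_mul_of_slope_eq (hf : ConvexOn 𝕜 s f) {p q w : 𝕜} (hp : p ∈ s)
    (hq : q ∈ s) (hw : w ∈ s) (hpq : p ≠ q) (hqw : q ≠ w) (h : slope f q p = slope f q w) :
    ∀ z ∈ Set.Icc p w, f z = f q + slope f q w * (z - q) := by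
  intro z hz
  rcases eq_or_ne z q with rfl | hzq
  · ring
  have hzs : z ∈ s := hf.1.ordConnected.out hp hw hz
  have hslope : slope f q z = slope f q w := le_antisymm
    (hf.slope_mono hq ⟨hzs, hzq⟩ ⟨hw, hqw.symm⟩ hz.2)
    (h ▸ hf.slope_mono hq ⟨hp, hpq⟩ ⟨hzs, hzq⟩ hz.1)
  linear_combination (sub_mul_slope f q z).symm + (z - q) * hslope

theorem ConvexOn.antitoneOn_of_slope_nonpos (hf : ConvexOn 𝕜 s f) {a b : 𝕜} (ha : a ∈ s)
    (hb : b ∈ s) (hab : a ≠ b) (hslope : slope f a b ≤ 0) :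
    AntitoneOn f (s ∩ Set.Iic (min a b)) := by
  intro u hu v hv huv
  rcases huv.eq_or_lt with rfl | huv
  · rfl
  refine (slope_nonpos_iff_of_le huv.le).1 (le_trans ?_ hslope)
  exact hf.slope_le_slope_of_le_of_le hu.1 hv.1 ha hb huv.ne hab (hu.2.trans (min_le_left a b))
    (hv.2.trans (min_le_right a b))

theorem ConvexOn.abs_sub_le_slope_mul_of_monotoneOn (hf : ConvexOn 𝕜 s f)
    (hmono : MonotoneOn f s) {a b p q : 𝕜} (ha : a ∈ s) (hb : b ∈ s) (hp : p ∈ s) (hq : q ∈ s)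
    (hap : a ≤ p) (hbp : b ≤ p) (hpq : p < q) :
    |f a - f b| ≤ slope f p q * |a - b| := by
  rcases eq_or_ne a b with rfl | hab
  · simp
  have hslope : slope f b a ≤ slope f p q :=
    hf.slope_le_slope_of_le_of_le hb ha hp hq hab.symm hpq.ne hbp (hap.trans hpq.le)
  rw [← sub_mul_slope f b a, abs_mul, abs_of_nonneg (hmono.slope_nonneg hb ha), mul_comm]
  exact mul_le_mul_of_nonneg_right hslope (abs_nonneg _)

end Slope

theorem tendsto_zero_of_tendsto_sum_range {G : Type*} [AddCommGroup G] [TopologicalSpace G]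
    [IsTopologicalAddGroup G] {f : ℕ → G} {L : G}
    (h : Tendsto (fun n => ∑ i ∈ range n, f i) atTop (𝓝 L)) : Tendsto f atTop (𝓝 0) := by
  simpa [sum_range_succ_sub_sum] using (h.comp (tendsto_add_atTop_nat 1)).sub h

theorem summable_of_tendsto_sum_range_of_eventually_nonneg {f : ℕ → ℝ} {L : ℝ}
    (hf : ∀ᶠ n in atTop, 0 ≤ f n) (h : Tendsto (fun n => ∑ i ∈ range n, f i) atTop (𝓝 L)) :
    Summable f := by
  obtain ⟨K, hK⟩ := eventually_atTop.1 hf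
  obtain ⟨B, hB⟩ := h.bddAbove_range
  refine (summable_nat_add_iff K).1 (summable_of_sum_range_le (c := B - ∑ i ∈ range K, f i)
    (fun n => hK _ (Nat.le_add_left K n)) fun n => ?_)
  have : ∑ i ∈ range (K + n), f i ≤ B := hB ⟨K + n, rfl⟩
  rw [sum_range_add] at this
  simp only [add_comm K] at this ⊢
  linarith

theorem frequently_ne_zero_of_hasSum_zero {d : ℕ → ℝ} (hd : HasSum d 0)
    (hD : ∀ N, 0 < N → ∑ k ∈ range N, d k ≠ 0) : ∃ᶠ k in atTop, d k ≠ 0 := by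
  refine frequently_atTop.2 fun N => ?_
  by_contra! h
  refine hD (N + 1) N.succ_pos (hd.unique (hasSum_sum_of_ne_finset_zero fun k hk => h k ?_)).symm
  simp only [mem_range, not_lt] at hk
  omega

theorem exists_antitone_eqOn_of_frequently {α : Type*} [Preorder α] {P : ℕ → Prop} {σ : ℕ → α}
    (hP : ∃ᶠ k in atTop, P k) (hσ : AntitoneOn σ {k | P k}) :
    ∃ t : ℕ → α, Antitone t ∧ ∀ k, P k → t k = σ k := by
  classical
  have hnext : ∀ N, ∃ k, N ≤ k ∧ P k := frequently_atTop.1 hP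
  refine ⟨fun N => σ (Nat.find (hnext N)), fun N M hNM => ?_, fun k hk => ?_⟩
  · have hM := Nat.find_spec (hnext M)
    exact hσ (Nat.find_spec (hnext N)).2 hM.2
      (Nat.find_min' (hnext N) ⟨hNM.trans hM.1, hM.2⟩)
  · have : Nat.find (hnext k) = k :=
      le_antisymm (Nat.find_min' _ ⟨le_rfl, hk⟩) (Nat.find_spec (hnext k)).1
    simp only [this]

section Abel

variable {t d : ℕ → ℝ}

theorem Antitone.mul_sum_range_le_tsum_abs (ht : Antitone t) (hd : HasSum d 0)
    (htd : Summable fun k => t k * d k) {m n : ℕ} (hmn : m ≤ n) (hD : ∑ k ∈ range n, d k ≤ 0) :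
    t m * ∑ k ∈ range n, d k ≤ ∑' k, |t (k + n) * d (k + n)| := by
  rcases le_or_gt 0 (t m) with htm | htm
  · exact (mul_nonpos_of_nonneg_of_nonpos htm hD).trans (tsum_nonneg fun k => abs_nonneg _)
  have htail : ∑ k ∈ range n, d k = -∑' k, d (k + n) := by
    linarith [hd.summable.sum_add_tsum_nat_add n, hd.tsum_eq]
  have hterm : ∀ k, -t m * d (k + n) ≤ |t (k + n) * d (k + n)| := fun k => by
    have : t (k + n) ≤ t m := ht (hmn.trans (Nat.le_add_left n k))
    calc -t m * d (k + n) ≤ -t m * |d (k + n)| :=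
          mul_le_mul_of_nonneg_left (le_abs_self _) (neg_nonneg.2 htm.le)
      _ ≤ |t (k + n)| * |d (k + n)| := by
          rw [abs_of_neg (this.trans_lt htm)]
          exact mul_le_mul_of_nonneg_right (neg_le_neg this) (abs_nonneg _)
      _ = |t (k + n) * d (k + n)| := (abs_mul _ _).symm
  calc t m * ∑ k ∈ range n, d k = ∑' k, -t m * d (k + n) := by
        rw [htail, tsum_mul_left]; ring
    _ ≤ ∑' k, |t (k + n) * d (k + n)| :=
        Summable.tsum_le_tsum hterm (((summable_nat_add_iff n).2 hd.summable).mul_left _)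
          ((summable_nat_add_iff n).2 htd).abs

theorem Antitone.eq_apply_zero_of_hasSum_mul (ht : Antitone t) (hd : HasSum d 0)
    (htd : HasSum (fun k => t k * d k) 0) (hD : ∀ N, 0 < N → ∑ k ∈ range N, d k < 0) :
    ∀ k, t k = t 0 := by
  set D : ℕ → ℝ := fun N => ∑ k ∈ range N, d k
  -- Summation by parts: the nonnegative gaps `(t (k + 1) - t k) * D (k + 1)` add up to a boundary
  -- term, bounded by a tail of `∑ |t k * d k|`, minus a partial sum of `∑ t k * d k`.
  have hparts : ∀ N, ∑ k ∈ range N, (t (k + 1) - t k) * D (k + 1) =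
      t N * D (N + 1) - ∑ k ∈ range (N + 1), t k * d k := fun N => by
    have := sum_range_by_parts t d (N + 1)
    simp only [smul_eq_mul, Nat.add_sub_cancel] at this
    simp only [D]
    linarith
  have hgap : ∀ k, 0 ≤ (t (k + 1) - t k) * D (k + 1) := fun k =>
    mul_nonneg_of_nonpos_of_nonpos (sub_nonpos.2 (ht k.le_succ)) (hD _ k.succ_pos).le
  have htail : Tendsto (fun N => ∑' k, |t (k + (N + 1)) * d (k + (N + 1))| -
      ∑ k ∈ range (N + 1), t k * d k) atTop (𝓝 0) := by
    simpa using ((tendsto_sum_nat_add fun k => |t k * d k|).comp (tendsto_add_atTop_nat 1)).sub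
      (htd.tendsto_sum_nat.comp (tendsto_add_atTop_nat 1))
  have hgap_zero : ∀ k, (t (k + 1) - t k) * D (k + 1) = 0 := fun k => by
    refine le_antisymm (_root_.ge_of_tendsto htail ?_) (hgap k)
    filter_upwards [eventually_gt_atTop k] with N hN
    calc (t (k + 1) - t k) * D (k + 1) ≤ ∑ j ∈ range N, (t (j + 1) - t j) * D (j + 1) :=
          single_le_sum (fun j _ => hgap j) (mem_range.2 hN)
      _ = t N * D (N + 1) - ∑ k ∈ range (N + 1), t k * d k := hparts N
      _ ≤ _ := sub_le_sub_right
          (ht.mul_sum_range_le_tsum_abs hd htd.summable N.le_succ (hD _ N.succ_pos).le) _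
  intro k
  induction k with
  | zero => rfl
  | succ k ih =>
    have := hgap_zero k
    rw [mul_eq_zero, sub_eq_zero] at this
    exact (this.resolve_right (hD _ k.succ_pos).ne).trans ih

end Abel

theorem summable_comp_of_antitoneOn {Φ : ℝ → ℝ} {a : ℝ} (ha : 0 < a)
    (hΦ : AntitoneOn Φ (Set.Ioc 0 a)) {z : ℕ → ℝ} (hz0 : ∀ k, 0 < z k)
    (hz : Tendsto z atTop (𝓝 0)) {L : ℝ}
    (hL : Tendsto (fun n => ∑ k ∈ range n, Φ (z k)) atTop (𝓝 L)) : Summable fun k => Φ (z k) := by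
  have hsmall : ∀ p > 0, ∀ᶠ k in atTop, z k ∈ Set.Ioc 0 p := fun p hp =>
    (hz.eventually (gt_mem_nhds hp)).mono fun k hk => ⟨hz0 k, hk.le⟩
  have hnonpos : ∀ p ∈ Set.Ioc 0 a, Φ p ≤ 0 := fun p hp =>
    ge_of_tendsto (tendsto_zero_of_tendsto_sum_range hL)
      ((hsmall p hp.1).mono fun k hk => hΦ ⟨hk.1, hk.2.trans hp.2⟩ hp hk.2)
  have hneg : Summable fun k => -Φ (z k) :=
    summable_of_tendsto_sum_range_of_eventually_nonneg
      ((hsmall a ha).mono fun k hk => neg_nonneg.2 (hnonpos _ hk))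
      (by simpa only [sum_neg_distrib] using hL.neg)
  simpa using hneg.neg

theorem summable_sub_comp_of_convexOn {Φ : ℝ → ℝ} (hΦ : ConvexOn ℝ (Set.Ioo 0 1) Φ)
    {x y : ℕ → ℝ} (hx01 : ∀ k, x k ∈ Set.Ioo (0 : ℝ) 1) (hy01 : ∀ k, y k ∈ Set.Ioo (0 : ℝ) 1)
    (hx : Tendsto x atTop (𝓝 0)) (hy : Tendsto y atTop (𝓝 0))
    (hxy : Summable fun k => x k - y k) {Lx Ly : ℝ}
    (hLx : Tendsto (fun n => ∑ k ∈ range n, Φ (x k)) atTop (𝓝 Lx))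
    (hLy : Tendsto (fun n => ∑ k ∈ range n, Φ (y k)) atTop (𝓝 Ly)) :
    Summable fun k => Φ (x k) - Φ (y k) := by
  -- A convex function is either monotone, hence Lipschitz near `0`, or antitone near `0`.
  by_cases hmono : MonotoneOn Φ (Set.Ioo 0 1)
  · refine (hxy.abs.mul_left (slope Φ (1 / 2) (3 / 4))).of_norm_bounded_eventually ?_
    have hhalf : ∀ {z : ℕ → ℝ}, Tendsto z atTop (𝓝 0) → ∀ᶠ k in atTop, z k ≤ 1 / 2 :=
      fun hz => hz.eventually (ge_mem_nhds (by norm_num))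
    rw [Nat.cofinite_eq_atTop]
    filter_upwards [hhalf hx, hhalf hy] with k hxk hyk
    exact hΦ.abs_sub_le_slope_mul_of_monotoneOn hmono (hx01 k) (hy01 k) (by norm_num)
      (by norm_num) hxk hyk (by norm_num)
  · obtain ⟨a, ha, b, hb, hab, hΦab⟩ : ∃ a ∈ Set.Ioo (0 : ℝ) 1, ∃ b ∈ Set.Ioo (0 : ℝ) 1,
        a ≤ b ∧ Φ b < Φ a := by
      simpa [MonotoneOn, and_assoc] using hmono
    have hanti : AntitoneOn Φ (Set.Ioc 0 a) :=
      (hΦ.antitoneOn_of_slope_nonpos ha hb (fun h => by simp [h] at hΦab)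
        ((slope_nonpos_iff_of_le hab).2 hΦab.le)).mono fun p hp =>
          ⟨⟨hp.1, hp.2.trans_lt ha.2⟩, hp.2.trans_eq (min_eq_left hab).symm⟩
    exact (summable_comp_of_antitoneOn ha.1 hanti (fun k => (hx01 k).1) hx hLx).sub
      (summable_comp_of_antitoneOn ha.1 hanti (fun k => (hy01 k).1) hy hLy)

theorem exists_affine_of_slope_eq {Φ : ℝ → ℝ} (hΦ : ConvexOn ℝ (Set.Ioo 0 1) Φ) {x y : ℕ → ℝ}
    (hy : Antitone y) (hx01 : ∀ k, x k ∈ Set.Ioo (0 : ℝ) 1)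
    (hy01 : ∀ k, y k ∈ Set.Ioo (0 : ℝ) 1) (hx : Tendsto x atTop (𝓝 0))
    (hfreq : ∃ᶠ k in atTop, x k ≠ y k) (h0 : x 0 < y 0)
    (hslope : ∀ k, x k ≠ y k → slope Φ (x k) (y k) = slope Φ (x 0) (y 0)) :
    ∃ c d : ℝ, ∀ z ∈ Set.Ioc 0 (y 0), Φ z = c * z + d := by
  set c := slope Φ (x 0) (y 0)
  refine ⟨c, Φ (x 0) - c * x 0, fun z hz => ?_⟩
  obtain ⟨k, hk, hxk⟩ : ∃ k, x k ≠ y k ∧ x k < min z (x 0) :=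
    (hfreq.and_eventually (hx.eventually (gt_mem_nhds (lt_min hz.1 (hx01 0).1)))).exists
  have hxk0 : x k < x 0 := hxk.trans_le (min_le_right _ _)
  have hk0 : slope Φ (x k) (y 0) = c := le_antisymm
    (hΦ.slope_le_slope_of_le_of_le (hx01 k) (hy01 0) (hx01 0) (hy01 0) (hxk0.trans h0).ne h0.ne
      hxk0.le le_rfl)
    ((hslope k hk).symm.trans_le (hΦ.slope_le_slope_of_le_of_le (hx01 k) (hy01 k) (hx01 k)
      (hy01 0) hk (hxk0.trans h0).ne le_rfl (hy (Nat.zero_le k))))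
  have h0k : slope Φ (x 0) (x k) = c := by
    rw [slope_comm]
    exact slope_eq_of_slope_eq_slope hxk0.ne hk0
  rw [hΦ.eq_add_slope_mul_of_slope_eq (hx01 k) (hx01 0) (hy01 0) hxk0.ne h0.ne h0k z
    ⟨(hxk.trans_le (min_le_left _ _)).le, hz.2⟩]
  ring

theorem extended_karamata_equality (x y : ℕ → ℝ) (hx : Antitone x) (hy : Antitone y)
    (hx01 : ∀ k, x k ∈ Set.Ioo (0 : ℝ) 1) (hy01 : ∀ k, y k ∈ Set.Ioo (0 : ℝ) 1)
    (hmaj : ∀ N : ℕ, ∑ k ∈ Finset.range N, x k ≤ ∑ k ∈ Finset.range N, y k)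
    (hsx : Summable x) (hsy : Summable y)
    (hsum : ∑' k, x k = ∑' k, y k)
    (Φ : ℝ → ℝ) (hΦ : ConvexOn ℝ (Set.Ioo 0 1) Φ)
    (hnotaffine : ¬ ∃ c d : ℝ, ∀ t ∈ Set.Ioc (0 : ℝ) (y 0), Φ t = c * t + d)
    (L : ℝ)
    (hLy : Tendsto (fun N => ∑ k ∈ Finset.range N, Φ (y k)) atTop (𝓝 L))
    (hLx : Tendsto (fun N => ∑ k ∈ Finset.range N, Φ (x k)) atTop (𝓝 L)) :
    ∃ N : ℕ, 1 ≤ N ∧ ∑ k ∈ Finset.range N, x k = ∑ k ∈ Finset.range N, y k := by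
  by_contra! hcon
  have hd : HasSum (fun k => x k - y k) 0 := by simpa [hsum] using hsx.hasSum.sub hsy.hasSum
  have hD : ∀ N, 0 < N → ∑ k ∈ range N, (x k - y k) < 0 := fun N hN => by
    rw [sum_sub_distrib, sub_neg]
    exact (hmaj N).lt_of_ne (hcon N hN)
  have hfreq : ∃ᶠ k in atTop, x k ≠ y k :=
    (frequently_ne_zero_of_hasSum_zero hd fun N hN => (hD N hN).ne).mono fun k => sub_ne_zero.1
  obtain ⟨t, ht, hteq⟩ := exists_antitone_eqOn_of_frequently hfreq
    (σ := fun k => slope Φ (x k) (y k)) fun j hj k hk hjk =>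
      hΦ.slope_le_slope_of_le_of_le (hx01 k) (hy01 k) (hx01 j) (hy01 j) hk hj (hx hjk) (hy hjk)
  have hΦt : ∀ k, Φ (x k) - Φ (y k) = t k * (x k - y k) := fun k => by
    rcases eq_or_ne (x k) (y k) with h | h
    · simp [h]
    · rw [hteq k h, slope_comm, mul_comm, sub_mul_slope]
  have htd : HasSum (fun k => t k * (x k - y k)) 0 := by
    have hs := summable_sub_comp_of_convexOn hΦ hx01 hy01 hsx.tendsto_atTop_zero
      hsy.tendsto_atTop_zero hd.summable hLx hLy
    have hlim := hLx.sub hLy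
    simp only [← sum_sub_distrib, hΦt, sub_self] at hs hlim
    exact hs.hasSum_iff_tendsto_nat.2 hlim
  have hconst := ht.eq_apply_zero_of_hasSum_mul hd htd hD
  have h0 : x 0 < y 0 := by simpa using hD 1 one_pos
  refine hnotaffine (exists_affine_of_slope_eq hΦ hy hx01 hy01 hsx.tendsto_atTop_zero hfreq h0
    fun k hk => ?_)
  rw [← hteq k hk, ← hteq 0 h0.ne, hconst k]
end

section
/- For every w ∈ ℂ and every ball B centered at w, ∫_B e^{−π|z|²} |e^{π w̄ z}|² dA(z) = e^{π|w|²} (1 − e^{−|B|}). -/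
/-!
Completing the square gives `e^{-π|z|²} |e^{π w̄ z}|² = e^{π|w|²} e^{-π|z-w|²}`, so the integral is
`e^{π|w|²}` times the Gaussian mass of a disc of radius `r` around its centre. In polar coordinates
that mass is `2π ∫₀ʳ t e^{-πt²} dt = 1 - e^{-πr²} = 1 - e^{-|B|}`.
-/

open Real MeasureTheory Set Metric Module

theorem integral_mul_exp_neg_mul_sq {b : ℝ} (hb : b ≠ 0) (r : ℝ) :
    ∫ t in (0)..r, t * exp (-b * t ^ 2) = (1 - exp (-b * r ^ 2)) / (2 * b) := by
  have hderiv : ∀ t ∈ uIcc 0 r,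
      HasDerivAt (fun t ↦ -(2 * b)⁻¹ * exp (-b * t ^ 2)) (t * exp (-b * t ^ 2)) t := by
    intro t _
    refine (((hasDerivAt_pow 2 t).const_mul (-b)).exp.const_mul (-(2 * b)⁻¹)).congr_deriv ?_
    field
  rw [intervalIntegral.integral_eq_sub_of_hasDerivAt hderiv
    (Continuous.intervalIntegrable (by fun_prop) _ _), zero_pow two_ne_zero, mul_zero, exp_zero]
  field

theorem setIntegral_ball_fun_norm_sub_addHaar {E F : Type*} [NormedAddCommGroup E]
    [NormedSpace ℝ E] [Nontrivial E] [FiniteDimensional ℝ E] [MeasurableSpace E] [BorelSpace E]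
    [NormedAddCommGroup F] [NormedSpace ℝ F] (μ : Measure E) [μ.IsAddHaarMeasure]
    (f : ℝ → F) (c : E) (r : ℝ) :
    ∫ x in ball c r, f ‖x - c‖ ∂μ
      = finrank ℝ E • μ.real (ball 0 1) • ∫ t in Ioo 0 r, t ^ (finrank ℝ E - 1) • f t := by
  have hball : (ball c r).indicator (fun x ↦ f ‖x - c‖) = fun x ↦ (Iio r).indicator f ‖x - c‖ := by
    ext x
    simp only [indicator, mem_ball_iff_norm, mem_Iio]
  rw [← integral_indicator measurableSet_ball, hball,
    integral_sub_right_eq_self (fun x ↦ (Iio r).indicator f ‖x‖), integral_fun_norm_addHaar,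
    ← Ioi_inter_Iio, ← setIntegral_indicator measurableSet_Iio]
  simp only [indicator_smul_apply]

theorem Complex.volume_real_ball (a : ℂ) {r : ℝ} (hr : 0 ≤ r) :
    volume.real (ball a r) = π * r ^ 2 := by
  simp [measureReal_def, hr, mul_comm]

theorem Complex.setIntegral_ball_fun_norm_sub (f : ℝ → ℝ) (c : ℂ) {r : ℝ} (hr : 0 ≤ r) :
    ∫ z in ball c r, f ‖z - c‖ = 2 * π * ∫ t in (0)..r, t * f t := by
  rw [setIntegral_ball_fun_norm_sub_addHaar, Complex.volume_real_ball 0 zero_le_one,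
    intervalIntegral.integral_of_le hr, integral_Ioc_eq_integral_Ioo]
  simp [mul_assoc]

theorem Complex.setIntegral_ball_exp_neg_mul_norm_sub_sq {b : ℝ} (hb : b ≠ 0) (c : ℂ) {r : ℝ}
    (hr : 0 ≤ r) :
    ∫ z in ball c r, Real.exp (-b * ‖z - c‖ ^ 2) = π / b * (1 - Real.exp (-b * r ^ 2)) := by
  rw [Complex.setIntegral_ball_fun_norm_sub (fun t ↦ Real.exp (-b * t ^ 2)) c hr,
    integral_mul_exp_neg_mul_sq hb]
  field

theorem Complex.exp_neg_mul_norm_sq_mul_norm_exp_conj_mul_sq (b : ℝ) (w z : ℂ) :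
    Real.exp (-b * ‖z‖ ^ 2) * ‖exp (b * (starRingEnd ℂ) w * z)‖ ^ 2
      = Real.exp (b * ‖w‖ ^ 2) * Real.exp (-b * ‖z - w‖ ^ 2) := by
  rw [norm_exp, ← Real.exp_nat_mul, ← Real.exp_add, ← Real.exp_add]
  congr 1
  simp only [Complex.sq_norm, normSq_apply, mul_re, mul_im, conj_re, conj_im, ofReal_re, ofReal_im,
    sub_re, sub_im]
  push_cast
  ring

theorem kernel_integral_ball (w : ℂ) (r : ℝ) (hr : 0 < r) :
    ∫ z in Metric.ball w r,
        Real.exp (-Real.pi * ‖z‖ ^ 2)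
          * ‖Complex.exp ((Real.pi : ℂ) * (starRingEnd ℂ) w * z)‖ ^ 2
      = Real.exp (Real.pi * ‖w‖ ^ 2)
          * (1 - Real.exp (-(volume (Metric.ball w r)).toReal)) := by
  simp_rw [Complex.exp_neg_mul_norm_sq_mul_norm_exp_conj_mul_sq, integral_const_mul,
    Complex.setIntegral_ball_exp_neg_mul_norm_sub_sq pi_ne_zero w hr.le, div_self pi_ne_zero,
    one_mul, ← measureReal_def, Complex.volume_real_ball w hr.le, neg_mul]
end
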